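/- In the setting of the Cancellation Lemma over 𝔽₂, the composition F ∘ G : C ⊕ D → C ⊕ D is chain homotopic to the identity; explicitly, the map K : C ⊕ D → C ⊕ D given by K(c, x) = (0, H(x)) satisfies id + F ∘ G = d ∘ K + K ∘ d. -/
import Mathlib

private lemma char2_add_self {M : Type*} [AddCommGroup M] [Module (ZMod 2) M]
    (a : M) : a + a = 0 := by
  have h2 : (2 : ZMod 2) = 0 := rfl
  calc a + a = (2 : ZMod 2) • a := (two_smul (ZMod 2) a).symm
    _ = 0 := by rw [h2, zero_smul]

/-- Cancellation Lemma over 𝔽₂: `F ∘ G` is chain homotopic to the identity on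
`C ⊕ D` via the homotopy `K(c, x) = (0, H x)`:  `id + F ∘ G = d ∘ K + K ∘ d`. -/
theorem cancellation_FG_homotopic_to_id
    {C D : Type*} [AddCommGroup C] [AddCommGroup D]
    [Module (ZMod 2) C] [Module (ZMod 2) D]
    (dCC : C →ₗ[ZMod 2] C) (dCD : D →ₗ[ZMod 2] C)
    (dDC : C →ₗ[ZMod 2] D) (dDD : D →ₗ[ZMod 2] D)
    (h1 : dCC ∘ₗ dCC + dCD ∘ₗ dDC = 0)
    (h2 : dCC ∘ₗ dCD + dCD ∘ₗ dDD = 0)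
    (h3 : dDC ∘ₗ dCC + dDD ∘ₗ dDC = 0)
    (h4 : dDC ∘ₗ dCD + dDD ∘ₗ dDD = 0)
    (H : D →ₗ[ZMod 2] D)
    (hH1 : dDD ∘ₗ H + H ∘ₗ dDD = LinearMap.id)
    (hH2 : H ∘ₗ H = 0)
    (hH3 : H ∘ₗ dDD ∘ₗ H = H)
    (d : C × D →ₗ[ZMod 2] C × D)
    (hd : ∀ c x, d (c, x) = (dCC c + dCD x, dDC c + dDD x))
    (F : C →ₗ[ZMod 2] C × D)
    (hF : ∀ c, F c = (c, H (dDC c)))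
    (G : C × D →ₗ[ZMod 2] C)
    (hG : ∀ c x, G (c, x) = c + dCD (H x))
    (K : C × D →ₗ[ZMod 2] C × D)
    (hK : ∀ c x, K (c, x) = (0, H x)) :
    LinearMap.id + F ∘ₗ G = d ∘ₗ K + K ∘ₗ d := by
  -- pointwise versions of the hypotheses
  have f4 : ∀ y, dDC (dCD y) = dDD (dDD y) := by
    intro y
    have := congrArg (fun f => f y) h4
    simp only [LinearMap.add_apply, LinearMap.comp_apply, LinearMap.zero_apply] at this
    have h := congrArg (fun z => z + dDD (dDD y)) this
    simpa [add_assoc, char2_add_self] using h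
  have fH1 : ∀ y, dDD (H y) + H (dDD y) = y := by
    intro y
    have := congrArg (fun f => f y) hH1
    simpa using this
  have fH3 : ∀ y, H (dDD (H y)) = H y := by
    intro y
    have := congrArg (fun f => f y) hH3
    simpa using this
  have e1 : ∀ y, H (dDC (dCD (H y))) = 0 := by
    intro y
    rw [f4]
    -- H (dDD (dDD (H y))) = 0
    have h1' := fH1 (dDD (H y))
    rw [fH3] at h1'
    -- dDD (H y) + H (dDD (dDD (H y))) = dDD (H y)
    have := congrArg (fun z => dDD (H y) + z) h1'.symm
    simpa [← add_assoc, char2_add_self] using this.symm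
  apply LinearMap.ext
  rintro ⟨c, x⟩
  simp only [LinearMap.add_apply, LinearMap.comp_apply, LinearMap.id_apply, hd, hK,
    Prod.fst_add, Prod.snd_add]
  rw [hG, hF]
  ext
  · simp only [Prod.fst_add, Prod.snd_add, map_add, map_zero]
    rw [← add_assoc, char2_add_self, zero_add]
    abel
  · simp only [Prod.fst_add, Prod.snd_add, map_add, map_zero, e1]
    conv_lhs => rw [← fH1 x]
    abel
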